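/- Let f : [0,t*]×[0,∞) → ℝ be continuous and bounded, and let β ∈ (0,1). Then the spatial derivative ∂_y of w(t,y) = ∫₀^t ∫₀^∞ f(τ,ξ)G(y,ξ,t−τ) dξ dτ is β-Hölder in y, with seminorm bounded by C(β,t*)‖f‖_∞/(1−β), where G is the half-line Dirichlet heat Green's function. -/

import Mathlib

open MeasureTheory Real Set

/-- The 1D heat kernel `Φ(z,s) = (4πs)^{-1/2} exp(−z²/(4s))`. -/
noncomputable def Phi (z s : ℝ) : ℝ := (1 / Real.sqrt (4 * π * s)) * Real.exp (-z ^ 2 / (4 * s))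

/-- The half-line Dirichlet Green's function `G(y,ξ,s) = Φ(y−ξ,s) − Φ(y+ξ,s)`. -/
noncomputable def Gker (y ξ s : ℝ) : ℝ := Phi (y - ξ) s - Phi (y + ξ) s

/-!
Write `J(τ, y) = ∫₀^∞ f(τ, ξ) ∂_y G(y, ξ, t - τ) dξ`. Gaussian bounds on `∂_zΦ` and `∂_z²Φ` justify
differentiating under both integrals, so `∂_y w = ∫₀ᵗ J(τ, ·) dτ`, and give, with `s = t - τ`,
`|J(τ, y)| ≲ M / √s` and `|∂_y J(τ, y)| ≲ M / s`. The geometric mean of the two resulting bounds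
on `|J(τ, y) - J(τ, x)|` is `≲ M |y - x|^β s^{-(1+β)/2}`, whose integral over `τ ∈ (0, t)` is
`≲ M |y - x|^β t^{(1-β)/2} / (1 - β)`.
-/

noncomputable def dPhi (z s : ℝ) : ℝ := -(z / (2 * s)) * Phi z s

noncomputable def d2Phi (z s : ℝ) : ℝ := (z ^ 2 / (4 * s ^ 2) - 1 / (2 * s)) * Phi z s

theorem hasDerivAt_Phi {s : ℝ} (hs : 0 < s) (z : ℝ) :
    HasDerivAt (fun z => Phi z s) (dPhi z s) z := by
  have h : HasDerivAt (fun z : ℝ => -z ^ 2 / (4 * s)) (-(2 * z) / (4 * s)) z := by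
    simpa using (hasDerivAt_pow 2 z).neg.div_const (4 * s)
  refine (h.exp.const_mul (1 / √(4 * π * s))).congr_deriv ?_
  unfold dPhi Phi
  field_simp
  ring

theorem hasDerivAt_dPhi {s : ℝ} (hs : 0 < s) (z : ℝ) :
    HasDerivAt (fun z => dPhi z s) (d2Phi z s) z := by
  have h : HasDerivAt (fun z : ℝ => -(z / (2 * s))) (-(1 / (2 * s))) z :=
    ((hasDerivAt_id z).div_const (2 * s)).neg
  refine (h.mul (hasDerivAt_Phi hs z)).congr_deriv ?_
  unfold d2Phi dPhi
  field_simp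
  ring

theorem continuous_dPhi (s : ℝ) : Continuous fun z => dPhi z s := by
  unfold dPhi Phi; fun_prop

theorem continuous_d2Phi (s : ℝ) : Continuous fun z => d2Phi z s := by
  unfold d2Phi Phi; fun_prop

theorem exp_neg_sq_div_le_one {s : ℝ} (hs : 0 < s) (z : ℝ) : exp (-z ^ 2 / (8 * s)) ≤ 1 :=
  exp_le_one_iff.2 (by rw [neg_div]; exact neg_nonpos.2 (by positivity))

theorem sq_mul_exp_neg_sq_div_le {s : ℝ} (hs : 0 < s) (z : ℝ) :
    z ^ 2 * exp (-z ^ 2 / (8 * s)) ≤ 8 * s := by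
  have h := add_one_le_exp (z ^ 2 / (8 * s))
  rw [neg_div, exp_neg, ← div_eq_mul_inv, div_le_iff₀ (exp_pos _)]
  calc z ^ 2 = 8 * s * (z ^ 2 / (8 * s)) := by field_simp
    _ ≤ 8 * s * exp (z ^ 2 / (8 * s)) := by gcongr; linarith

theorem abs_mul_exp_neg_sq_div_le {s : ℝ} (hs : 0 < s) (z : ℝ) :
    |z| * exp (-z ^ 2 / (8 * s)) ≤ 3 * √s := by
  have hE := exp_neg_sq_div_le_one hs z
  have hsq : (|z| * exp (-z ^ 2 / (8 * s))) ^ 2 ≤ (3 * √s) ^ 2 := by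
    rw [mul_pow, sq_abs, mul_pow, sq_sqrt hs.le]
    nlinarith [sq_mul_exp_neg_sq_div_le hs z, exp_pos (-z ^ 2 / (8 * s))]
  exact (pow_le_pow_iff_left₀ (by positivity) (by positivity) two_ne_zero).1 hsq

/-- The Gaussian bounds below spend one factor `exp(-z²/(8s))` on the polynomial prefactor. -/
theorem Phi_eq {s : ℝ} (z : ℝ) :
    Phi z s = (√(4 * π * s))⁻¹ * exp (-z ^ 2 / (8 * s)) ^ 2 := by
  rw [Phi, one_div, ← exp_nat_mul]
  congr 3
  by_cases hs : s = 0
  · simp [hs]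
  · field_simp; ring

theorem Phi_nonneg (z s : ℝ) : 0 ≤ Phi z s := by
  unfold Phi; positivity

theorem Phi_le {s : ℝ} (hs : 0 < s) (z : ℝ) :
    Phi z s ≤ (√s)⁻¹ * exp (-z ^ 2 / (8 * s)) ^ 2 := by
  rw [Phi_eq]
  gcongr
  nlinarith [pi_gt_three]

theorem abs_Phi_le {s : ℝ} (hs : 0 < s) (z : ℝ) :
    |Phi z s| ≤ (√s)⁻¹ * exp (-z ^ 2 / (8 * s)) := by
  have hE := exp_neg_sq_div_le_one hs z
  rw [abs_of_nonneg (Phi_nonneg z s)]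
  refine (Phi_le hs z).trans ?_
  gcongr
  nlinarith [exp_pos (-z ^ 2 / (8 * s))]

theorem abs_dPhi_le {s : ℝ} (hs : 0 < s) (z : ℝ) :
    |dPhi z s| ≤ 2 * s⁻¹ * exp (-z ^ 2 / (8 * s)) := by
  set E := exp (-z ^ 2 / (8 * s))
  have hzE := abs_mul_exp_neg_sq_div_le hs z
  calc |dPhi z s| = |z| / (2 * s) * Phi z s := by
        rw [dPhi, abs_mul, abs_neg, abs_div, abs_of_pos (by positivity : (0:ℝ) < 2 * s),
          abs_of_nonneg (Phi_nonneg z s)]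
    _ ≤ |z| / (2 * s) * ((√s)⁻¹ * E ^ 2) := by gcongr; exact Phi_le hs z
    _ = (|z| * E) * E / (2 * s * √s) := by field_simp
    _ ≤ (3 * √s) * E / (2 * s * √s) := by gcongr
    _ ≤ 2 * s⁻¹ * E := by
        rw [div_le_iff₀ (by positivity)]
        field_simp
        nlinarith [exp_pos (-z ^ 2 / (8 * s))]

theorem abs_d2Phi_le {s : ℝ} (hs : 0 < s) (z : ℝ) :
    |d2Phi z s| ≤ 3 * (s * √s)⁻¹ * exp (-z ^ 2 / (8 * s)) := by
  set E := exp (-z ^ 2 / (8 * s))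
  have hz2E := sq_mul_exp_neg_sq_div_le hs z
  have hE := exp_neg_sq_div_le_one hs z
  calc |d2Phi z s| ≤ (z ^ 2 / (4 * s ^ 2) + 1 / (2 * s)) * Phi z s := by
        rw [d2Phi, abs_mul, abs_of_nonneg (Phi_nonneg z s)]
        gcongr
        · exact Phi_nonneg z s
        refine (abs_sub _ _).trans_eq ?_
        rw [abs_of_nonneg (by positivity : (0:ℝ) ≤ z ^ 2 / (4 * s ^ 2)),
          abs_of_nonneg (by positivity : (0:ℝ) ≤ 1 / (2 * s))]
    _ ≤ (z ^ 2 / (4 * s ^ 2) + 1 / (2 * s)) * ((√s)⁻¹ * E ^ 2) := by gcongr; exact Phi_le hs z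
    _ = (z ^ 2 * E / (4 * s) + E / 2) * E / (s * √s) := by field_simp
    _ ≤ (8 * s / (4 * s) + 1 / 2) * E / (s * √s) := by gcongr
    _ ≤ 3 * (s * √s)⁻¹ * E := by
        rw [div_le_iff₀ (by positivity)]
        field_simp
        nlinarith [exp_pos (-z ^ 2 / (8 * s))]

/-- Method of images: `Gker y ξ s` is `imageKernel (Phi · s) y ξ` by definition. -/
def imageKernel (φ : ℝ → ℝ) (y ξ : ℝ) : ℝ := φ (y - ξ) - φ (y + ξ)

noncomputable def gaussPair (a y ξ : ℝ) : ℝ := exp (-(y - ξ) ^ 2 / a) + exp (-(y + ξ) ^ 2 / a)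

theorem gaussPair_nonneg (a y ξ : ℝ) : 0 ≤ gaussPair a y ξ := by
  unfold gaussPair; positivity

theorem hasDerivAt_imageKernel {φ φ' : ℝ → ℝ} (hφ : ∀ z, HasDerivAt φ (φ' z) z) (ξ y : ℝ) :
    HasDerivAt (fun y => imageKernel φ y ξ) (imageKernel φ' y ξ) y := by
  have h₁ := (hφ (y - ξ)).comp y ((hasDerivAt_id y).sub_const ξ)
  have h₂ := (hφ (y + ξ)).comp y ((hasDerivAt_id y).add_const ξ)
  simp only [mul_one] at h₁ h₂
  exact h₁.sub h₂

theorem continuous_imageKernel {φ : ℝ → ℝ} (hφ : Continuous φ) (y : ℝ) :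
    Continuous (imageKernel φ y) := by
  unfold imageKernel; fun_prop

theorem abs_imageKernel_le {φ : ℝ → ℝ} {A a : ℝ} (hφ : ∀ z, |φ z| ≤ A * exp (-z ^ 2 / a))
    (y ξ : ℝ) : |imageKernel φ y ξ| ≤ A * gaussPair a y ξ := by
  rw [gaussPair, mul_add]
  exact (abs_sub _ _).trans (add_le_add (hφ _) (hφ _))

theorem integrable_exp_neg_sq_div {a : ℝ} (ha : 0 < a) :
    Integrable fun z : ℝ => exp (-z ^ 2 / a) := by
  simpa [neg_div, div_eq_inv_mul] using integrable_exp_neg_mul_sq (inv_pos.2 ha)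

theorem integrable_exp_neg_sq_div_add {a : ℝ} (ha : 0 < a) (y : ℝ) :
    Integrable fun ξ => exp (-(y + ξ) ^ 2 / a) := by
  simpa only [add_comm] using (integrable_exp_neg_sq_div ha).comp_add_right y

theorem integrable_gaussPair {a : ℝ} (ha : 0 < a) (y : ℝ) : Integrable (gaussPair a y) :=
  ((integrable_exp_neg_sq_div ha).comp_sub_left y).add (integrable_exp_neg_sq_div_add ha y)

theorem integral_gaussPair {a : ℝ} (ha : 0 < a) (y : ℝ) :
    ∫ ξ, gaussPair a y ξ = 2 * √(π * a) := by
  have hG : ∫ z, exp (-z ^ 2 / a) = √(π * a) := by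
    simpa [neg_div, div_eq_inv_mul, mul_comm] using integral_gaussian a⁻¹
  have h₁ : ∫ ξ, exp (-(y - ξ) ^ 2 / a) = √(π * a) :=
    (integral_sub_left_eq_self (fun z => exp (-z ^ 2 / a)) volume y).trans hG
  have h₂ : ∫ ξ, exp (-(y + ξ) ^ 2 / a) = √(π * a) := by
    simpa only [add_comm] using
      (integral_add_right_eq_self (fun z => exp (-z ^ 2 / a)) y).trans hG
  change ∫ ξ, (exp (-(y - ξ) ^ 2 / a) + exp (-(y + ξ) ^ 2 / a)) = _
  rw [integral_add ((integrable_exp_neg_sq_div ha).comp_sub_left y)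
    (integrable_exp_neg_sq_div_add ha y), h₁, h₂, two_mul]

theorem setIntegral_gaussPair_le {a : ℝ} (ha : 0 < a) (y : ℝ) :
    ∫ ξ in Ioi 0, gaussPair a y ξ ≤ 2 * √(π * a) :=
  (setIntegral_le_integral (integrable_gaussPair ha y)
    (.of_forall (gaussPair_nonneg a y))).trans_eq (integral_gaussPair ha y)

theorem exp_neg_sq_div_le {a : ℝ} (ha : 0 < a) (w z : ℝ) :
    exp (-w ^ 2 / a) ≤ exp ((w - z) ^ 2 / a) * exp (-z ^ 2 / (2 * a)) := by
  have hz : z ^ 2 ≤ 2 * w ^ 2 + 2 * (w - z) ^ 2 := by nlinarith [sq_nonneg (2 * w - z)]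
  rw [← exp_add, exp_le_exp, div_add_div _ _ ha.ne' (by positivity),
    div_le_div_iff₀ ha (by positivity)]
  nlinarith [mul_nonneg (sq_nonneg a) (sub_nonneg.2 hz)]

theorem gaussPair_le {a : ℝ} (ha : 0 < a) (y y₀ ξ : ℝ) :
    gaussPair a y ξ ≤ exp ((y - y₀) ^ 2 / a) * gaussPair (2 * a) y₀ ξ := by
  rw [gaussPair, gaussPair, mul_add]
  gcongr
  · simpa using exp_neg_sq_div_le ha (y - ξ) (y₀ - ξ)
  · simpa using exp_neg_sq_div_le ha (y + ξ) (y₀ + ξ)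

section HalfLinePotential

variable {g φ φ' : ℝ → ℝ} {M A B a : ℝ}

theorem integrable_imageKernel (hφ : Continuous φ) (ha : 0 < a)
    (hφA : ∀ z, |φ z| ≤ A * exp (-z ^ 2 / a)) (y : ℝ) : Integrable (imageKernel φ y) :=
  ((integrable_gaussPair ha y).const_mul A).mono' (continuous_imageKernel hφ y).aestronglyMeasurable
    (.of_forall fun ξ => abs_imageKernel_le hφA y ξ)

theorem abs_setIntegral_mul_imageKernel_le (hgM : ∀ ξ ∈ Ioi (0:ℝ), |g ξ| ≤ M) (ha : 0 < a)
    (hφA : ∀ z, |φ z| ≤ A * exp (-z ^ 2 / a)) (y : ℝ) :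
    |∫ ξ in Ioi 0, g ξ * imageKernel φ y ξ| ≤ M * A * (2 * √(π * a)) := by
  have hM : 0 ≤ M := (abs_nonneg _).trans (hgM 1 (mem_Ioi.2 one_pos))
  have hA : 0 ≤ A := by simpa using (abs_nonneg _).trans (hφA 0)
  rw [← norm_eq_abs]
  calc ‖∫ ξ in Ioi 0, g ξ * imageKernel φ y ξ‖
      ≤ ∫ ξ in Ioi 0, M * (A * gaussPair a y ξ) := by
        refine norm_integral_le_of_norm_le
          (((integrable_gaussPair ha y).const_mul A).const_mul M).integrableOn ?_
        filter_upwards [ae_restrict_mem measurableSet_Ioi] with ξ hξ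
        rw [norm_mul, norm_eq_abs, norm_eq_abs]
        exact mul_le_mul (hgM ξ hξ) (abs_imageKernel_le hφA y ξ) (abs_nonneg _) hM
    _ = M * A * ∫ ξ in Ioi 0, gaussPair a y ξ := by
        rw [integral_const_mul, integral_const_mul, mul_assoc]
    _ ≤ M * A * (2 * √(π * a)) := by gcongr; exact setIntegral_gaussPair_le ha y

/-- Differentiation under the integral sign: on `|y - y₀| < 1` the kernels are dominated by one
Gaussian of doubled width centred at `y₀`. -/
theorem hasDerivAt_setIntegral_mul_imageKernel
    (hg : AEStronglyMeasurable g (volume.restrict (Ioi 0))) (hgM : ∀ ξ ∈ Ioi (0:ℝ), |g ξ| ≤ M)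
    (hφ : ∀ z, HasDerivAt φ (φ' z) z) (hφ' : Continuous φ') (ha : 0 < a)
    (hφA : ∀ z, |φ z| ≤ A * exp (-z ^ 2 / a)) (hφ'B : ∀ z, |φ' z| ≤ B * exp (-z ^ 2 / a))
    (y₀ : ℝ) :
    HasDerivAt (fun y => ∫ ξ in Ioi 0, g ξ * imageKernel φ y ξ)
      (∫ ξ in Ioi 0, g ξ * imageKernel φ' y₀ ξ) y₀ := by
  have hM : 0 ≤ M := (abs_nonneg _).trans (hgM 1 (mem_Ioi.2 one_pos))
  have hB : 0 ≤ B := by simpa using (abs_nonneg _).trans (hφ'B 0)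
  have hφc : Continuous φ := continuous_iff_continuousAt.2 fun z => (hφ z).continuousAt
  have hgM' : ∀ᵐ ξ ∂volume.restrict (Ioi 0), ‖g ξ‖ ≤ M := by
    filter_upwards [ae_restrict_mem measurableSet_Ioi] with ξ hξ using hgM ξ hξ
  refine (hasDerivAt_integral_of_dominated_loc_of_deriv_le
    (bound := fun ξ => M * (B * (exp (1 / a) * gaussPair (2 * a) y₀ ξ)))
    (Metric.ball_mem_nhds y₀ one_pos)
    (.of_forall fun y => hg.mul (continuous_imageKernel hφc y).aestronglyMeasurable)
    ((integrable_imageKernel hφc ha hφA y₀).integrableOn.bdd_mul hg hgM')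
    (hg.mul (continuous_imageKernel hφ' y₀).aestronglyMeasurable) ?_
    (((((integrable_gaussPair (by positivity) y₀).const_mul _).const_mul B).const_mul
      M).integrableOn)
    (.of_forall fun ξ y _ => (hasDerivAt_imageKernel hφ ξ y).const_mul (g ξ))).2
  filter_upwards [ae_restrict_mem measurableSet_Ioi] with ξ hξ y hy
  have hy : (y - y₀) ^ 2 ≤ 1 := by
    rw [Metric.mem_ball, Real.dist_eq] at hy
    nlinarith [abs_nonneg (y - y₀), sq_abs (y - y₀)]
  rw [norm_mul, norm_eq_abs, norm_eq_abs]
  refine mul_le_mul (hgM ξ hξ) ((abs_imageKernel_le hφ'B y ξ).trans ?_) (abs_nonneg _) hM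
  gcongr
  exact (gaussPair_le ha y y₀ ξ).trans (by gcongr; exact gaussPair_nonneg _ _ _)

end HalfLinePotential

theorem le_rpow_mul_rpow_of_le_of_le {D u v β : ℝ} (hD : 0 ≤ D) (hu : D ≤ u) (hv : D ≤ v)
    (hβ0 : 0 ≤ β) (hβ1 : β ≤ 1) : D ≤ u ^ (1 - β) * v ^ β := by
  calc D = D ^ (1 - β) * D ^ β := by rw [← rpow_add' hD (by norm_num), sub_add_cancel, rpow_one]
    _ ≤ u ^ (1 - β) * v ^ β :=
        mul_le_mul (rpow_le_rpow hD hu (by linarith)) (rpow_le_rpow hD hv hβ0)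
          (rpow_nonneg hD _) (rpow_nonneg (hD.trans hu) _)

theorem div_sqrt_rpow_mul_rpow_eq {K h s β : ℝ} (hK : 0 ≤ K) (hh : 0 ≤ h) (hs : 0 < s) :
    (K / √s) ^ (1 - β) * (K * h / s) ^ β = K * h ^ β * s ^ (-(1 + β) / 2) := by
  have hKK : K ^ (1 - β) * K ^ β = K := by
    rw [← rpow_add' hK (by norm_num), sub_add_cancel, rpow_one]
  have hss : s ^ (-(1 + β) / 2) = (s ^ (1 / 2 * (1 - β)))⁻¹ * (s ^ β)⁻¹ := by
    rw [← rpow_neg hs.le, ← rpow_neg hs.le, ← rpow_add hs]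
    ring_nf
  rw [div_rpow hK (sqrt_nonneg s), div_rpow (mul_nonneg hK hh) hs.le, mul_rpow hK hh,
    sqrt_eq_rpow, ← rpow_mul hs.le, hss]
  conv_rhs => rw [← hKK]
  ring

theorem sqrt_pi_mul_eight_mul (s : ℝ) : √(π * (8 * s)) = √(8 * π) * √s := by
  rw [← sqrt_mul (by positivity)]
  ring_nf

section HeatKernel

variable {g : ℝ → ℝ} {M s : ℝ}

theorem measurable_Gker (y : ℝ) : Measurable fun p : ℝ × ℝ => Gker y p.1 p.2 := by
  unfold Gker Phi; fun_prop

theorem measurable_dG (y : ℝ) : Measurable fun p : ℝ × ℝ => imageKernel (dPhi · p.2) y p.1 := by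
  unfold imageKernel dPhi Phi; fun_prop

theorem hasDerivAt_setIntegral_mul_Gker
    (hg : AEStronglyMeasurable g (volume.restrict (Ioi 0))) (hgM : ∀ ξ ∈ Ioi (0:ℝ), |g ξ| ≤ M)
    (hs : 0 < s) (y : ℝ) :
    HasDerivAt (fun y => ∫ ξ in Ioi 0, g ξ * Gker y ξ s)
      (∫ ξ in Ioi 0, g ξ * imageKernel (dPhi · s) y ξ) y :=
  hasDerivAt_setIntegral_mul_imageKernel hg hgM (hasDerivAt_Phi hs) (continuous_dPhi s)
    (by positivity) (abs_Phi_le hs) (abs_dPhi_le hs) y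

theorem hasDerivAt_setIntegral_mul_dG
    (hg : AEStronglyMeasurable g (volume.restrict (Ioi 0))) (hgM : ∀ ξ ∈ Ioi (0:ℝ), |g ξ| ≤ M)
    (hs : 0 < s) (y : ℝ) :
    HasDerivAt (fun y => ∫ ξ in Ioi 0, g ξ * imageKernel (dPhi · s) y ξ)
      (∫ ξ in Ioi 0, g ξ * imageKernel (d2Phi · s) y ξ) y :=
  hasDerivAt_setIntegral_mul_imageKernel hg hgM (hasDerivAt_dPhi hs) (continuous_d2Phi s)
    (by positivity) (abs_dPhi_le hs) (abs_d2Phi_le hs) y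

theorem abs_setIntegral_mul_Gker_le (hgM : ∀ ξ ∈ Ioi (0:ℝ), |g ξ| ≤ M) (hs : 0 < s) (y : ℝ) :
    |∫ ξ in Ioi 0, g ξ * Gker y ξ s| ≤ 2 * √(8 * π) * M := by
  refine (abs_setIntegral_mul_imageKernel_le hgM (by positivity) (abs_Phi_le hs) y).trans_eq ?_
  rw [sqrt_pi_mul_eight_mul s]
  field_simp

theorem abs_setIntegral_mul_dG_le (hgM : ∀ ξ ∈ Ioi (0:ℝ), |g ξ| ≤ M) (hs : 0 < s) (y : ℝ) :
    |∫ ξ in Ioi 0, g ξ * imageKernel (dPhi · s) y ξ| ≤ 4 * √(8 * π) * M / √s := by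
  refine (abs_setIntegral_mul_imageKernel_le hgM (by positivity) (abs_dPhi_le hs) y).trans_eq ?_
  rw [sqrt_pi_mul_eight_mul s]
  field_simp
  rw [sq_sqrt hs.le]
  ring

theorem abs_setIntegral_mul_d2G_le (hgM : ∀ ξ ∈ Ioi (0:ℝ), |g ξ| ≤ M) (hs : 0 < s) (y : ℝ) :
    |∫ ξ in Ioi 0, g ξ * imageKernel (d2Phi · s) y ξ| ≤ 6 * √(8 * π) * M / s := by
  refine (abs_setIntegral_mul_imageKernel_le hgM (by positivity) (abs_d2Phi_le hs) y).trans_eq ?_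
  rw [sqrt_pi_mul_eight_mul s]
  field_simp
  ring

/-- Interpolating the bound `O(M/√s)` against the Lipschitz bound `O(M |y - x| / s)`. -/
theorem abs_setIntegral_mul_dG_sub_le
    (hg : AEStronglyMeasurable g (volume.restrict (Ioi 0))) (hgM : ∀ ξ ∈ Ioi (0:ℝ), |g ξ| ≤ M)
    (hs : 0 < s) {β : ℝ} (hβ0 : 0 ≤ β) (hβ1 : β ≤ 1) (x y : ℝ) :
    |(∫ ξ in Ioi 0, g ξ * imageKernel (dPhi · s) y ξ) -
        ∫ ξ in Ioi 0, g ξ * imageKernel (dPhi · s) x ξ|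
      ≤ 8 * √(8 * π) * M * |y - x| ^ β * s ^ (-(1 + β) / 2) := by
  have hM : 0 ≤ M := (abs_nonneg _).trans (hgM 1 (mem_Ioi.2 one_pos))
  have hsup : |(∫ ξ in Ioi 0, g ξ * imageKernel (dPhi · s) y ξ) -
      ∫ ξ in Ioi 0, g ξ * imageKernel (dPhi · s) x ξ| ≤ 8 * √(8 * π) * M / √s :=
    (abs_sub _ _).trans ((add_le_add (abs_setIntegral_mul_dG_le hgM hs y)
      (abs_setIntegral_mul_dG_le hgM hs x)).trans_eq (by ring))
  have hlip : |(∫ ξ in Ioi 0, g ξ * imageKernel (dPhi · s) y ξ) -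
      ∫ ξ in Ioi 0, g ξ * imageKernel (dPhi · s) x ξ| ≤ 8 * √(8 * π) * M * |y - x| / s := by
    refine (Convex.norm_image_sub_le_of_norm_hasDerivWithin_le
      (fun z _ => (hasDerivAt_setIntegral_mul_dG hg hgM hs z).hasDerivWithinAt)
      (fun z _ => abs_setIntegral_mul_d2G_le hgM hs z) convex_univ (mem_univ x)
      (mem_univ y)).trans ?_
    rw [norm_eq_abs, div_mul_eq_mul_div]
    gcongr ?_ / s
    nlinarith [mul_nonneg (mul_nonneg (sqrt_nonneg (8 * π)) hM) (abs_nonneg (y - x))]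
  calc _ ≤ (8 * √(8 * π) * M / √s) ^ (1 - β) * (8 * √(8 * π) * M * |y - x| / s) ^ β :=
        le_rpow_mul_rpow_of_le_of_le (abs_nonneg _) hsup hlip hβ0 hβ1
    _ = 8 * √(8 * π) * M * |y - x| ^ β * s ^ (-(1 + β) / 2) :=
        div_sqrt_rpow_mul_rpow_eq (by positivity) (abs_nonneg _) hs

end HeatKernel

theorem integrableOn_Ioc_sub_rpow {a t r : ℝ} (hat : a ≤ t) (hr : -1 < r) :
    IntegrableOn (fun τ => (t - τ) ^ r) (Ioc a t) := by
  have h := (intervalIntegral.intervalIntegrable_rpow' hr (a := t - a) (b := 0)).comp_sub_left t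
  simp only [sub_sub_cancel, sub_zero] at h
  exact (intervalIntegrable_iff_integrableOn_Ioc_of_le hat).1 h

theorem integral_Ioc_sub_rpow {a t r : ℝ} (hat : a ≤ t) (hr : -1 < r) :
    ∫ τ in Ioc a t, (t - τ) ^ r = (t - a) ^ (r + 1) / (r + 1) := by
  rw [← intervalIntegral.integral_of_le hat,
    intervalIntegral.integral_comp_sub_left (fun x => x ^ r) t, integral_rpow (Or.inl hr),
    sub_self, zero_rpow (by linarith), sub_zero]

theorem ae_mem_Ioo_of_restrict_Ioc {a b : ℝ} : ∀ᵐ τ ∂volume.restrict (Ioc a b), τ ∈ Ioo a b :=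
  ae_restrict_of_ae_eq_of_ae_restrict Ioo_ae_eq_Ioc (ae_restrict_mem measurableSet_Ioo)

section Duhamel

variable {f : ℝ × ℝ → ℝ} {M t : ℝ}

theorem aestronglyMeasurable_slice (hf : ContinuousOn f (Icc 0 t ×ˢ Ici 0)) {τ : ℝ}
    (hτ : τ ∈ Icc 0 t) : AEStronglyMeasurable (fun ξ => f (τ, ξ)) (volume.restrict (Ioi 0)) :=
  ((hf.comp (Continuous.prodMk_right τ).continuousOn fun _ hξ => ⟨hτ, hξ⟩).mono
    Ioi_subset_Ici_self).aestronglyMeasurable measurableSet_Ioi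

theorem aestronglyMeasurable_integral_slice (hf : ContinuousOn f (Icc 0 t ×ˢ Ici 0))
    {K : ℝ → ℝ → ℝ} (hK : Measurable fun p : ℝ × ℝ => K p.1 p.2) :
    AEStronglyMeasurable (fun τ => ∫ ξ in Ioi 0, f (τ, ξ) * K ξ (t - τ))
      (volume.restrict (Ioc 0 t)) := by
  have hF : AEStronglyMeasurable (fun p : ℝ × ℝ => f p * K p.2 (t - p.1))
      (volume.restrict (Ioc 0 t ×ˢ Ioi 0)) :=
    ((hf.mono (prod_mono Ioc_subset_Icc_self Ioi_subset_Ici_self)).aestronglyMeasurable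
      (measurableSet_Ioc.prod measurableSet_Ioi)).mul
      (hK.comp (measurable_snd.prodMk (measurable_const.sub measurable_fst))).aestronglyMeasurable
  rw [Measure.volume_eq_prod, ← Measure.prod_restrict] at hF
  exact hF.integral_prod_right'

theorem ae_abs_integral_dG_le (hfM : ∀ p ∈ Icc 0 t ×ˢ Ici 0, |f p| ≤ M) :
    ∀ᵐ τ ∂volume.restrict (Ioc 0 t), ∀ y,
      |∫ ξ in Ioi 0, f (τ, ξ) * imageKernel (dPhi · (t - τ)) y ξ|
        ≤ 4 * √(8 * π) * M * (t - τ) ^ (-(1 / 2) : ℝ) := by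
  filter_upwards [ae_mem_Ioo_of_restrict_Ioc] with τ hτ y
  rw [rpow_neg (sub_pos.2 hτ.2).le, ← sqrt_eq_rpow, ← div_eq_mul_inv]
  exact abs_setIntegral_mul_dG_le (fun ξ hξ => hfM _ ⟨Ioo_subset_Icc_self hτ, Ioi_subset_Ici_self hξ⟩)
    (sub_pos.2 hτ.2) y

theorem integrableOn_integral_dG (hf : ContinuousOn f (Icc 0 t ×ˢ Ici 0))
    (hfM : ∀ p ∈ Icc 0 t ×ˢ Ici 0, |f p| ≤ M) (ht : 0 ≤ t) (y : ℝ) :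
    IntegrableOn (fun τ => ∫ ξ in Ioi 0, f (τ, ξ) * imageKernel (dPhi · (t - τ)) y ξ)
      (Ioc 0 t) :=
  ((integrableOn_Ioc_sub_rpow (r := -(1 / 2)) ht (by norm_num)).const_mul _).mono'
    (aestronglyMeasurable_integral_slice (K := fun ξ s => imageKernel (dPhi · s) y ξ) hf
      (measurable_dG y))
    (by filter_upwards [ae_abs_integral_dG_le hfM] with τ hτ using hτ y)

theorem hasDerivAt_integral_Gker (hf : ContinuousOn f (Icc 0 t ×ˢ Ici 0))
    (hfM : ∀ p ∈ Icc 0 t ×ˢ Ici 0, |f p| ≤ M) (ht : 0 ≤ t) (y₀ : ℝ) :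
    HasDerivAt (fun y => ∫ τ in Ioc 0 t, ∫ ξ in Ioi 0, f (τ, ξ) * Gker y ξ (t - τ))
      (∫ τ in Ioc 0 t, ∫ ξ in Ioi 0, f (τ, ξ) * imageKernel (dPhi · (t - τ)) y₀ ξ) y₀ := by
  have hF_int : IntegrableOn (fun τ => ∫ ξ in Ioi 0, f (τ, ξ) * Gker y₀ ξ (t - τ)) (Ioc 0 t) := by
    refine (integrableOn_const (C := 2 * √(8 * π) * M) measure_Ioc_lt_top.ne).mono'
      (aestronglyMeasurable_integral_slice hf (measurable_Gker y₀)) ?_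
    filter_upwards [ae_mem_Ioo_of_restrict_Ioc] with τ hτ
    exact abs_setIntegral_mul_Gker_le (fun ξ hξ => hfM _ ⟨Ioo_subset_Icc_self hτ, Ioi_subset_Ici_self hξ⟩)
      (sub_pos.2 hτ.2) y₀
  refine (hasDerivAt_integral_of_dominated_loc_of_deriv_le
    (bound := fun τ => 4 * √(8 * π) * M * (t - τ) ^ (-(1 / 2) : ℝ)) Filter.univ_mem
    (.of_forall fun y => aestronglyMeasurable_integral_slice hf (measurable_Gker y))
    hF_int (aestronglyMeasurable_integral_slice
      (K := fun ξ s => imageKernel (dPhi · s) y₀ ξ) hf (measurable_dG y₀))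
    (by filter_upwards [ae_abs_integral_dG_le hfM] with τ hτ y _ using hτ y)
    ((integrableOn_Ioc_sub_rpow (r := -(1 / 2)) ht (by norm_num)).const_mul _) ?_).2
  filter_upwards [ae_mem_Ioo_of_restrict_Ioc] with τ hτ y _
  exact hasDerivAt_setIntegral_mul_Gker (aestronglyMeasurable_slice hf (Ioo_subset_Icc_self hτ))
    (fun ξ hξ => hfM _ ⟨Ioo_subset_Icc_self hτ, Ioi_subset_Ici_self hξ⟩) (sub_pos.2 hτ.2) y

theorem abs_integral_dG_sub_le (hf : ContinuousOn f (Icc 0 t ×ˢ Ici 0))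
    (hfM : ∀ p ∈ Icc 0 t ×ˢ Ici 0, |f p| ≤ M) (ht : 0 ≤ t) {β : ℝ} (hβ0 : 0 ≤ β) (hβ1 : β < 1)
    (x y : ℝ) :
    |(∫ τ in Ioc 0 t, ∫ ξ in Ioi 0, f (τ, ξ) * imageKernel (dPhi · (t - τ)) y ξ) -
        ∫ τ in Ioc 0 t, ∫ ξ in Ioi 0, f (τ, ξ) * imageKernel (dPhi · (t - τ)) x ξ|
      ≤ 16 * √(8 * π) * M * |y - x| ^ β * t ^ ((1 - β) / 2) / (1 - β) := by
  rw [← integral_sub (integrableOn_integral_dG hf hfM ht y) (integrableOn_integral_dG hf hfM ht x),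
    ← norm_eq_abs]
  calc _ ≤ ∫ τ in Ioc 0 t, 8 * √(8 * π) * M * |y - x| ^ β * (t - τ) ^ (-(1 + β) / 2) := by
        refine norm_integral_le_of_norm_le
          ((integrableOn_Ioc_sub_rpow ht (by linarith)).const_mul _) ?_
        filter_upwards [ae_mem_Ioo_of_restrict_Ioc] with τ hτ
        exact abs_setIntegral_mul_dG_sub_le (aestronglyMeasurable_slice hf (Ioo_subset_Icc_self hτ))
          (fun ξ hξ => hfM _ ⟨Ioo_subset_Icc_self hτ, Ioi_subset_Ici_self hξ⟩) (sub_pos.2 hτ.2) hβ0 hβ1.le x y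
    _ = 16 * √(8 * π) * M * |y - x| ^ β * t ^ ((1 - β) / 2) / (1 - β) := by
        rw [integral_const_mul, integral_Ioc_sub_rpow ht (by linarith), sub_zero,
          show -(1 + β) / 2 + 1 = (1 - β) / 2 by ring]
        field_simp
        ring

end Duhamel

theorem rpow_le_max_one {t T e : ℝ} (ht : 0 ≤ t) (htT : t ≤ T) (he0 : 0 ≤ e) (he1 : e ≤ 1) :
    t ^ e ≤ max 1 T := by
  rcases le_total t 1 with h | h
  · exact (rpow_le_one ht h he0).trans (le_max_left _ _)
  · calc t ^ e ≤ t ^ (1 : ℝ) := rpow_le_rpow_of_exponent_le h he1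
      _ = t := rpow_one t
      _ ≤ max 1 T := htT.trans (le_max_right _ _)

theorem stmt14_general (tstar β : ℝ) (hβ : β ∈ Set.Ioo (0 : ℝ) 1) :
    ∃ C > (0 : ℝ), ∀ (f : ℝ × ℝ → ℝ) (M : ℝ),
      ContinuousOn f (Set.Icc 0 tstar ×ˢ Set.Ici 0) →
      (∀ p ∈ Set.Icc (0:ℝ) tstar ×ˢ Set.Ici (0:ℝ), |f p| ≤ M) →
      ∀ t x y : ℝ, 0 < t → t ≤ tstar → 0 ≤ x → 0 ≤ y →
        |deriv (fun y' => ∫ τ in Set.Ioc (0 : ℝ) t,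
              ∫ ξ in Set.Ioi (0 : ℝ), f (τ, ξ) * Gker y' ξ (t - τ)) y -
            deriv (fun y' => ∫ τ in Set.Ioc (0 : ℝ) t,
              ∫ ξ in Set.Ioi (0 : ℝ), f (τ, ξ) * Gker y' ξ (t - τ)) x|
          ≤ C * M / (1 - β) * |x - y| ^ β := by
  obtain ⟨hβ0, hβ1⟩ := hβ
  refine ⟨16 * √(8 * π) * max 1 tstar, by positivity, ?_⟩
  intro f M hf hfM t x y ht htt _ _
  have hsub : Icc 0 t ×ˢ Ici 0 ⊆ Icc 0 tstar ×ˢ Ici (0 : ℝ) :=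
    prod_mono (Icc_subset_Icc_right htt) subset_rfl
  have hf' := hf.mono hsub
  have hfM' : ∀ p ∈ Icc 0 t ×ˢ Ici 0, |f p| ≤ M := fun p hp => hfM p (hsub hp)
  have hM : 0 ≤ M := (abs_nonneg _).trans (hfM' (0, 0) ⟨⟨le_rfl, ht.le⟩, self_mem_Ici⟩)
  rw [(hasDerivAt_integral_Gker hf' hfM' ht.le y).deriv,
    (hasDerivAt_integral_Gker hf' hfM' ht.le x).deriv, abs_sub_comm x y]
  refine (abs_integral_dG_sub_le hf' hfM' ht.le hβ0.le hβ1 x y).trans ?_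
  have hC : 0 ≤ 16 * √(8 * π) * M * |y - x| ^ β / (1 - β) :=
    div_nonneg (by positivity) (by linarith)
  calc 16 * √(8 * π) * M * |y - x| ^ β * t ^ ((1 - β) / 2) / (1 - β)
      = 16 * √(8 * π) * M * |y - x| ^ β / (1 - β) * t ^ ((1 - β) / 2) := by ring
    _ ≤ 16 * √(8 * π) * M * |y - x| ^ β / (1 - β) * max 1 tstar :=
        mul_le_mul_of_nonneg_left (rpow_le_max_one ht.le htt (by linarith) (by linarith)) hC
    _ = 16 * √(8 * π) * max 1 tstar * M / (1 - β) * |y - x| ^ β := by ring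

theorem stmt14 (tstar β : ℝ) (htstar : 0 < tstar) (hβ : β ∈ Set.Ioo (0 : ℝ) 1) :
    ∃ C > (0 : ℝ), ∀ (f : ℝ × ℝ → ℝ) (M : ℝ),
      ContinuousOn f (Set.Icc 0 tstar ×ˢ Set.Ici 0) →
      (∀ p ∈ Set.Icc (0:ℝ) tstar ×ˢ Set.Ici (0:ℝ), |f p| ≤ M) →
      ∀ t x y : ℝ, 0 < t → t ≤ tstar → 0 ≤ x → 0 ≤ y →
        |deriv (fun y' => ∫ τ in Set.Ioc (0 : ℝ) t,
              ∫ ξ in Set.Ioi (0 : ℝ), f (τ, ξ) * Gker y' ξ (t - τ)) y -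
            deriv (fun y' => ∫ τ in Set.Ioc (0 : ℝ) t,
              ∫ ξ in Set.Ioi (0 : ℝ), f (τ, ξ) * Gker y' ξ (t - τ)) x|
          ≤ C * M / (1 - β) * |x - y| ^ β :=
  stmt14_general tstar β hβ
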